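/- arXiv:1605.07272 — 2 statements merged into one kernel-verified Lean document; each statement's English description precedes it below -/
import Mathlib

section
/- There exists an absolute constant C such that the following holds for every 0 < δ < 0.1: if x, z ∈ ℝ^d with ‖z‖₂ = 1, ‖x‖₂² ≥ 1/4, and ‖⟨z, x⟩z − ‖x‖₂²·x‖₂ ≤ δ, then ‖xxᵀ − zzᵀ‖_F² ≤ C·δ. -/
open Matrix Finset

noncomputable section

/-- Euclidean norm of a finite real vector. -/
def vnorm {n : ℕ} (x : Fin n → ℝ) : ℝ := Real.sqrt (∑ i, (x i) ^ 2)

/-- Frobenius norm of a matrix. -/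
def frobNorm {m n : ℕ} (A : Matrix (Fin m) (Fin n) ℝ) : ℝ :=
  Real.sqrt (∑ i, ∑ j, (A i j) ^ 2)

/-- Outer product of two vectors, as a matrix. -/
def outer {n : ℕ} (x y : Fin n → ℝ) : Matrix (Fin n) (Fin n) ℝ := fun i j => x i * y j

lemma vnorm_sq {n : ℕ} (x : Fin n → ℝ) : vnorm x ^ 2 = ∑ i, (x i) ^ 2 := by
  rw [vnorm, Real.sq_sqrt]; positivity

lemma sum_sq_lin {n : ℕ} (c1 c2 : ℝ) (u v : Fin n → ℝ) :
    ∑ i, (c1 * u i - c2 * v i) ^ 2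
      = c1 ^ 2 * (∑ i, (u i) ^ 2) - 2 * c1 * c2 * (∑ i, u i * v i)
        + c2 ^ 2 * (∑ i, (v i) ^ 2) := by
  have e1 : ∑ i, (c1 * u i - c2 * v i) ^ 2
      = ∑ i, (c1 ^ 2 * (u i) ^ 2 - 2 * c1 * c2 * (u i * v i) + c2 ^ 2 * (v i) ^ 2) :=
    Finset.sum_congr rfl fun i _ => by ring
  rw [e1, Finset.sum_add_distrib, Finset.sum_sub_distrib]
  simp only [← Finset.mul_sum]

lemma stmt7_arith (a S δ : ℝ) (hδ : 0 < δ) (hδ1 : δ < 0.1) (hcs : a^2 ≤ S) (hS4 : (1:ℝ)/4 ≤ S)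
    (hkey : a ^ 2 * (1 - S) ^ 2 + S ^ 2 * (S - a ^ 2) ≤ δ ^ 2) :
    S ^ 2 - 2 * a ^ 2 + 1 ≤ 10 * δ := by
  have hδδ : δ ^ 2 ≤ 0.1 * δ := by nlinarith
  have h1 : S - a ^ 2 ≤ 16 * δ ^ 2 := by
    nlinarith [mul_nonneg (show (0:ℝ) ≤ S ^ 2 - 1/16 by nlinarith)
      (show (0:ℝ) ≤ S - a ^ 2 by linarith), sq_nonneg (a * (1 - S))]
  have hδ2 : δ ^ 2 < 0.01 := by nlinarith
  have ha2 : (0.09 : ℝ) ≤ a ^ 2 := by linarith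
  have h2 : (0.09 : ℝ) * (1 - S) ^ 2 ≤ δ ^ 2 := by
    nlinarith [mul_nonneg (show (0:ℝ) ≤ a ^ 2 - 0.09 by linarith) (sq_nonneg (1 - S)),
      mul_nonneg (sq_nonneg S) (show (0:ℝ) ≤ S - a ^ 2 by linarith)]
  nlinarith [h1, h2, hδδ]

/-- there is an absolute constant `C` such that for all `0 < δ < 0.1`:
if `‖z‖ = 1`, `‖x‖² ≥ 1/4` and `‖⟨z,x⟩z − ‖x‖²x‖ ≤ δ`, then `‖xxᵀ − zzᵀ‖_F² ≤ Cδ`. -/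
theorem stmt7 :
    ∃ C : ℝ, 0 < C ∧
      ∀ (d : ℕ) (δ : ℝ), 0 < δ → δ < 0.1 →
      ∀ x z : Fin d → ℝ,
        vnorm z = 1 →
        vnorm x ^ 2 ≥ 1 / 4 →
        vnorm ((z ⬝ᵥ x) • z - vnorm x ^ 2 • x) ≤ δ →
        frobNorm (outer x x - outer z z) ^ 2 ≤ C * δ := by
  refine ⟨10, by norm_num, ?_⟩
  intro d δ hδ hδ1 x z hz hx h
  set a : ℝ := z ⬝ᵥ x with ha
  set S : ℝ := ∑ i, (x i) ^ 2 with hS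
  have hSx : vnorm x ^ 2 = S := vnorm_sq x
  have hT : ∑ i, (z i) ^ 2 = 1 := by
    have := vnorm_sq z; rw [hz] at this; linarith [this]
  have hadef : a = ∑ i, z i * x i := rfl
  have hcs : a ^ 2 ≤ S := by
    have h2 := Finset.sum_mul_sq_le_sq_mul_sq Finset.univ z x
    calc a ^ 2 = (∑ i, z i * x i) ^ 2 := by rw [hadef]
      _ ≤ (∑ i, (z i) ^ 2) * (∑ i, (x i) ^ 2) := h2
      _ = S := by rw [hT, one_mul]
  have hS4 : (1:ℝ)/4 ≤ S := by rw [hSx] at hx; linarith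
  -- epsilon squared
  have heps : a ^ 2 - 2 * a ^ 2 * S + S ^ 3 ≤ δ ^ 2 := by
    have hv : vnorm (a • z - S • x) ≤ δ := by rwa [hSx] at h
    have h0 : 0 ≤ vnorm (a • z - S • x) := Real.sqrt_nonneg _
    have hsum : ∑ i, ((a • z - S • x) i) ^ 2 ≤ δ ^ 2 := by
      rw [← vnorm_sq]
      exact pow_le_pow_left₀ h0 hv 2
    have hexp : ∑ i, ((a • z - S • x) i) ^ 2
        = a ^ 2 * (∑ i, (z i) ^ 2) - 2 * a * S * (∑ i, z i * x i)
          + S ^ 2 * (∑ i, (x i) ^ 2) := by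
      simp only [Pi.sub_apply, Pi.smul_apply, smul_eq_mul]
      exact sum_sq_lin a S z x
    rw [hexp, hT, ← hadef, ← hS] at hsum
    nlinarith [hsum]
  -- Frobenius norm
  have hfrob : frobNorm (outer x x - outer z z) ^ 2 = S ^ 2 - 2 * a ^ 2 + 1 := by
    rw [frobNorm, Real.sq_sqrt (by positivity)]
    have hrow : ∀ i : Fin d, ∑ j, ((outer x x - outer z z) i j) ^ 2
        = (x i) ^ 2 * (∑ j, (x j) ^ 2) - 2 * (x i) * (z i) * (∑ j, x j * z j)
          + (z i) ^ 2 * (∑ j, (z j) ^ 2) := by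
      intro i
      have : ∀ j, ((outer x x - outer z z) i j) ^ 2 = (x i * x j - z i * z j) ^ 2 := by
        intro j; simp [outer, Matrix.sub_apply]
      rw [Finset.sum_congr rfl fun j _ => this j]
      exact sum_sq_lin (x i) (z i) x z
    rw [Finset.sum_congr rfl fun i _ => hrow i, Finset.sum_add_distrib,
      Finset.sum_sub_distrib, ← Finset.sum_mul, ← Finset.sum_mul, ← Finset.sum_mul]
    have hxz : ∑ i, x i * z i = a := by
      rw [hadef]; exact Finset.sum_congr rfl fun i _ => mul_comm _ _
    have e2 : ∑ i, 2 * x i * z i = 2 * a := by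
      rw [← hxz, Finset.mul_sum]; exact Finset.sum_congr rfl fun i _ => by ring
    rw [hT, hxz, e2, ← hS]
    ring
  rw [hfrob]
  clear_value a S
  have hkey : a ^ 2 * (1 - S) ^ 2 + S ^ 2 * (S - a ^ 2) ≤ δ ^ 2 := by nlinarith [heps]
  exact stmt7_arith a S δ hδ hδ1 hcs hS4 hkey
end
end

section
/- There exists an absolute constant C such that the following holds. Let z ∈ ℝ^d with ‖z‖₂ ≤ 1 and let α ≥ 4‖z‖_∞. Suppose x ∈ ℝ^d satisfies ‖x‖₂² ≥ 1/8. Then for every γ ≥ 0: ‖⟨z,x⟩z − ‖x‖₂²·x‖₂ ≤ ‖⟨z,x⟩z − ‖x‖₂²·x − γ∇R(x)‖₂. In particular, if ‖⟨z,x⟩z − ‖x‖₂²·x − γ∇R(x)‖₂ ≤ ε for some γ ≥ 0, then ‖⟨z,x⟩z − ‖x‖₂²·x‖₂ ≤ C·ε. -/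
/-!
Write `v = ⟨z,x⟩z − ‖x‖²x` and `g = ∇R(x)`. Since
`‖v − γg‖² = ‖v‖² − 2γ⟨v,g⟩ + γ²‖g‖²`, it suffices that `⟨v,g⟩ ≤ 0`, and this holds
coordinatewise: `gᵢ` is a nonnegative multiple of `xᵢ`, nonzero only where `|xᵢ| ≥ α ≥ 4|zᵢ|`,
and there `⟨z,x⟩zᵢxᵢ ≤ ‖x‖xᵢ²/4 ≤ ‖x‖²xᵢ²` by Cauchy–Schwarz and `‖x‖ ≥ 1/4`.
Hence `C = 1` works.
-/

open Matrix Finset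

noncomputable section

/-- Gradient of the regularizer `R(x) = ∑ᵢ (|xᵢ| − α)⁴ 1_{|xᵢ| ≥ α}`. -/
def gradR {d : ℕ} (α : ℝ) (x : Fin d → ℝ) : Fin d → ℝ :=
  fun i => if α ≤ |x i| then 4 * (|x i| - α) ^ 3 * Real.sign (x i) else 0

theorem norm_le_norm_sub_smul_of_inner_nonpos {E : Type*} [SeminormedAddCommGroup E]
    [InnerProductSpace ℝ E] {v g : E} (hvg : inner ℝ v g ≤ 0) {γ : ℝ} (hγ : 0 ≤ γ) :
    ‖v‖ ≤ ‖v - γ • g‖ := by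
  have hsq : ‖v - γ • g‖ ^ 2 = ‖v‖ ^ 2 - 2 * γ * inner ℝ v g + γ ^ 2 * ‖g‖ ^ 2 := by
    rw [norm_sub_sq_real, real_inner_smul_right, norm_smul, Real.norm_eq_abs, mul_pow, sq_abs]
    ring
  refine le_of_sq_le_sq ?_ (norm_nonneg _)
  nlinarith [mul_nonpos_of_nonneg_of_nonpos hγ hvg, sq_nonneg (γ * ‖g‖)]

theorem Real.sign_eq_div_abs (r : ℝ) : Real.sign r = r / |r| := by
  rcases lt_trichotomy r 0 with h | rfl | h
  · rw [Real.sign_of_neg h, abs_of_neg h, div_neg, div_self h.ne]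
  · simp
  · rw [Real.sign_of_pos h, abs_of_pos h, div_self h.ne']

section vnorm

variable {n : ℕ}

theorem vnorm_eq_norm_toLp (x : Fin n → ℝ) :
    vnorm x = ‖(WithLp.toLp 2 x : EuclideanSpace ℝ (Fin n))‖ := by
  simp [vnorm, EuclideanSpace.norm_eq]

theorem inner_toLp_eq_dotProduct (x y : Fin n → ℝ) :
    inner ℝ (WithLp.toLp 2 x : EuclideanSpace ℝ (Fin n)) (WithLp.toLp 2 y) = x ⬝ᵥ y := by
  simp [EuclideanSpace.inner_eq_star_dotProduct, dotProduct_comm]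

theorem vnorm_nonneg (x : Fin n → ℝ) : 0 ≤ vnorm x :=
  Real.sqrt_nonneg _

theorem abs_dotProduct_le_vnorm_mul_vnorm (x y : Fin n → ℝ) :
    |x ⬝ᵥ y| ≤ vnorm x * vnorm y := by
  simpa [vnorm_eq_norm_toLp, inner_toLp_eq_dotProduct] using
    abs_real_inner_le_norm (WithLp.toLp 2 x : EuclideanSpace ℝ (Fin n)) (WithLp.toLp 2 y)

theorem vnorm_le_vnorm_sub_smul {v g : Fin n → ℝ} (hvg : v ⬝ᵥ g ≤ 0) {γ : ℝ} (hγ : 0 ≤ γ) :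
    vnorm v ≤ vnorm (v - γ • g) := by
  have hvg' : inner ℝ (WithLp.toLp 2 v : EuclideanSpace ℝ (Fin n)) (WithLp.toLp 2 g) ≤ 0 := by
    rwa [inner_toLp_eq_dotProduct]
  simpa [vnorm_eq_norm_toLp] using norm_le_norm_sub_smul_of_inner_nonpos hvg' hγ

end vnorm

section gradR

variable {d : ℕ} {α : ℝ} {x : Fin d → ℝ}

theorem exists_gradR_apply_eq_mul (α : ℝ) (x : Fin d → ℝ) (i : Fin d) :
    ∃ c, 0 ≤ c ∧ (c = 0 ∨ α ≤ |x i|) ∧ gradR α x i = c * x i := by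
  by_cases hi : α ≤ |x i|
  · refine ⟨4 * (|x i| - α) ^ 3 / |x i|, ?_, Or.inr hi, ?_⟩
    · have : 0 ≤ |x i| - α := sub_nonneg.2 hi
      positivity
    · rw [gradR, if_pos hi, Real.sign_eq_div_abs]
      ring
  · exact ⟨0, le_rfl, Or.inl rfl, by simp [gradR, hi]⟩

theorem smul_sub_sq_smul_apply_mul_apply_nonpos {z : Fin d → ℝ} {s N : ℝ} {i : Fin d}
    (hs : |s| ≤ N) (hN : 1 / 4 ≤ N) (hz : 4 * |z i| ≤ α) (hx : α ≤ |x i|) :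
    (s • z - N ^ 2 • x) i * x i ≤ 0 := by
  calc (s • z - N ^ 2 • x) i * x i = s * z i * x i - N ^ 2 * (|x i| * |x i|) := by
        simp only [Pi.sub_apply, Pi.smul_apply, smul_eq_mul, abs_mul_abs_self]
        ring
    _ ≤ |s| * |z i| * |x i| - N ^ 2 * (|x i| * |x i|) := by
        refine sub_le_sub_right ?_ _
        exact (le_abs_self (s * z i * x i)).trans_eq (by rw [abs_mul, abs_mul])
    _ ≤ N * (|x i| / 4) * |x i| - N ^ 2 * (|x i| * |x i|) := by
        gcongr
        linarith
    _ = -(N * (N - 1 / 4) * (|x i| * |x i|)) := by ring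
    _ ≤ 0 := neg_nonpos.2 <|
        mul_nonneg (mul_nonneg (by linarith) (by linarith)) (mul_self_nonneg _)

theorem dotProduct_smul_sub_sq_smul_gradR_nonpos {z : Fin d → ℝ} {s N : ℝ}
    (hs : |s| ≤ N) (hN : 1 / 4 ≤ N) (hz : ∀ i, 4 * |z i| ≤ α) :
    (s • z - N ^ 2 • x) ⬝ᵥ gradR α x ≤ 0 := by
  refine Finset.sum_nonpos fun i _ => ?_
  obtain ⟨c, hc, hc0 | hi, hg⟩ := exists_gradR_apply_eq_mul α x i
  · simp [hg, hc0]
  · rw [hg, mul_left_comm]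
    exact mul_nonpos_of_nonneg_of_nonpos hc
      (smul_sub_sq_smul_apply_mul_apply_nonpos hs hN (hz i) hi)

end gradR

/-- there is an absolute constant `C` such that for `‖z‖ ≤ 1`,
`α ≥ 4‖z‖_∞` and `‖x‖² ≥ 1/8`: for every `γ ≥ 0`, removing the regularizer term only
decreases the norm, and in particular
`‖⟨z,x⟩z − ‖x‖²x − γ∇R(x)‖ ≤ ε` implies `‖⟨z,x⟩z − ‖x‖²x‖ ≤ Cε`. -/
theorem stmt10 :
    ∃ C : ℝ, 0 < C ∧
      ∀ (d : ℕ) (α : ℝ) (z x : Fin d → ℝ),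
        0 < α → vnorm z ≤ 1 → (∀ i, 4 * |z i| ≤ α) →
        vnorm x ^ 2 ≥ 1 / 8 →
        (∀ γ : ℝ, 0 ≤ γ →
          vnorm ((z ⬝ᵥ x) • z - vnorm x ^ 2 • x) ≤
            vnorm ((z ⬝ᵥ x) • z - vnorm x ^ 2 • x - γ • gradR α x)) ∧
        (∀ γ ε : ℝ, 0 ≤ γ →
          vnorm ((z ⬝ᵥ x) • z - vnorm x ^ 2 • x - γ • gradR α x) ≤ ε →
          vnorm ((z ⬝ᵥ x) • z - vnorm x ^ 2 • x) ≤ C * ε) := by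
  refine ⟨1, one_pos, fun d α z x _ hz hzα hx => ?_⟩
  have hN : 1 / 4 ≤ vnorm x := by nlinarith [vnorm_nonneg x]
  have hS : |z ⬝ᵥ x| ≤ vnorm x :=
    (abs_dotProduct_le_vnorm_mul_vnorm z x).trans
      (mul_le_of_le_one_left (vnorm_nonneg x) hz)
  have descent : ∀ γ : ℝ, 0 ≤ γ →
      vnorm ((z ⬝ᵥ x) • z - vnorm x ^ 2 • x) ≤
        vnorm ((z ⬝ᵥ x) • z - vnorm x ^ 2 • x - γ • gradR α x) := fun γ hγ =>
    vnorm_le_vnorm_sub_smul (dotProduct_smul_sub_sq_smul_gradR_nonpos hS hN hzα) hγ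
  exact ⟨descent, fun γ ε hγ hε => by simpa using (descent γ hγ).trans hε⟩
end
end
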